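/- arXiv:2202.04299 — 11 statements merged into one kernel-verified Lean document; each statement's English description precedes it below -/
import Mathlib

section
/- Let f : J → ℝ be a convex function on an interval J, let x₁,...,xₙ ∈ J and w₁,...,wₙ > 0 with Σwᵢ = 1, and let 0 < t ≤ 1. Then f(Σᵢ wᵢxᵢ) + ψ(t)/t ≤ Σᵢ wᵢ f(xᵢ), where ψ(t) := min{ (Σᵢ wᵢ f(t xᵢ + (1-t) Σⱼ wⱼxⱼ) - f(Σᵢ wᵢxᵢ))², t² }. -/
open Finset

theorem stmt_6 (J : Set ℝ) (f : ℝ → ℝ) (hf : ConvexOn ℝ J f) (n : ℕ)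
    (x : Fin n → ℝ) (w : Fin n → ℝ) (hx : ∀ i, x i ∈ J) (hw : ∀ i, 0 < w i)
    (hw1 : ∑ i, w i = 1) (t : ℝ) (ht0 : 0 < t) (ht1 : t ≤ 1) :
    f (∑ i, w i * x i) +
        (min ((∑ i, w i * f (t * x i + (1 - t) * ∑ j, w j * x j) - f (∑ i, w i * x i)) ^ 2)
          (t ^ 2)) / t ≤
      ∑ i, w i * f (x i) := by
  set S : ℝ := ∑ i, w i * x i with hS
  have hw0 : ∀ i ∈ Finset.univ, (0:ℝ) ≤ w i := fun i _ => (hw i).le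
  have hSmem : S ∈ J := by
    have := hf.1.sum_mem hw0 hw1 (fun i _ => hx i)
    simpa [smul_eq_mul] using this
  -- y i ∈ J
  have hy : ∀ i, t * x i + (1 - t) * S ∈ J := fun i =>
    hf.1 (hx i) hSmem ht0.le (by linarith) (by ring)
  -- Jensen at x: f S ≤ g 1
  have hJ1 : f S ≤ ∑ i, w i * f (x i) := by
    have := hf.map_sum_le hw0 hw1 (fun i _ => hx i)
    simpa [smul_eq_mul] using this
  -- Jensen at y: f S ≤ g t
  have hsum_y : ∑ i, w i * (t * x i + (1 - t) * S) = S := by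
    rw [Finset.sum_congr rfl (fun i _ => by ring :
      ∀ i ∈ Finset.univ, w i * (t * x i + (1 - t) * S)
        = t * (w i * x i) + (1 - t) * S * w i)]
    rw [Finset.sum_add_distrib, ← Finset.mul_sum, ← Finset.mul_sum, hw1]
    ring
  have hJt : f S ≤ ∑ i, w i * f (t * x i + (1 - t) * S) := by
    have := hf.map_sum_le hw0 hw1 (fun i _ => hy i)
    rw [show ∑ i, w i • (t * x i + (1 - t) * S) = S by simpa [smul_eq_mul] using hsum_y] at this
    simpa [smul_eq_mul] using this
  -- pointwise convexity and sum
  have hgt : ∑ i, w i * f (t * x i + (1 - t) * S)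
      ≤ t * (∑ i, w i * f (x i)) + (1 - t) * f S := by
    have hpt : ∀ i ∈ Finset.univ, w i * f (t * x i + (1 - t) * S)
        ≤ w i * (t * f (x i) + (1 - t) * f S) := fun i _ => by
      have := hf.2 (hx i) hSmem ht0.le (by linarith : (0:ℝ) ≤ 1 - t) (by ring)
      simpa [smul_eq_mul] using mul_le_mul_of_nonneg_left this (hw i).le
    calc ∑ i, w i * f (t * x i + (1 - t) * S)
        ≤ ∑ i, w i * (t * f (x i) + (1 - t) * f S) := Finset.sum_le_sum hpt
      _ = t * (∑ i, w i * f (x i)) + (1 - t) * f S := by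
          rw [Finset.sum_congr rfl (fun i _ => by ring :
            ∀ i ∈ Finset.univ, w i * (t * f (x i) + (1 - t) * f S)
              = t * (w i * f (x i)) + (1 - t) * f S * w i)]
          rw [Finset.sum_add_distrib, ← Finset.mul_sum, ← Finset.mul_sum, hw1]
          ring
  set D : ℝ := ∑ i, w i * f (t * x i + (1 - t) * S) - f S with hD
  have hD0 : 0 ≤ D := by linarith
  have hmin : min (D ^ 2) (t ^ 2) ≤ D * t := by
    rcases le_total D t with h | h
    · exact le_trans (min_le_left _ _) (by nlinarith)
    · exact le_trans (min_le_right _ _) (by nlinarith)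
  have hdiv : min (D ^ 2) (t ^ 2) / t ≤ D := by
    rw [div_le_iff₀ ht0]; exact hmin
  nlinarith [mul_nonneg (by linarith : (0:ℝ) ≤ 1 - t)
    (by linarith : (0:ℝ) ≤ ∑ i, w i * f (x i) - f S)]
end

section
/- Let f : J → (0,∞) be a differentiable geometrically convex function on an interval J ⊂ (0,∞). Then for any s, t ∈ J, (t/s)^(s f'(s)/f(s)) ≤ f(t)/f(s) ≤ (t/s)^(t f'(t)/f(t)). -/
open Real Set Filter Topology

lemma aux_deriv_nonneg {h : ℝ → ℝ} {D : ℝ}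
    (hd : HasDerivAt h D 0) (h0 : h 0 = 0)
    (hnn : ∀ l ∈ Ioc (0:ℝ) 1, 0 ≤ h l) : 0 ≤ D := by
  have htend : Tendsto (slope h 0) (𝓝[>] 0) (𝓝 D) :=
    (hasDerivAt_iff_tendsto_slope.mp hd).mono_left
      (nhdsWithin_mono 0 (fun x hx => ne_of_gt hx))
  refine ge_of_tendsto htend ?_
  filter_upwards [Ioc_mem_nhdsGT_of_mem (⟨le_refl _, zero_lt_one⟩ : (0:ℝ) ∈ Ico (0:ℝ) 1)]
    with x hx
  have hx0 : 0 < x := hx.1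
  rw [slope_def_field, h0]
  have h1 := hnn x hx
  apply div_nonneg (by linarith) (by linarith)

lemma aux_key (J : Set ℝ) (hJ : J ⊆ Set.Ioi (0 : ℝ)) (f f' : ℝ → ℝ)
    (hpos : ∀ x ∈ J, 0 < f x)
    (hderiv : ∀ x ∈ J, HasDerivAt f (f' x) x)
    (hgc : ∀ a ∈ J, ∀ b ∈ J, ∀ l : ℝ, 0 ≤ l → l ≤ 1 →
      f (a ^ (1 - l) * b ^ l) ≤ f a ^ (1 - l) * f b ^ l)
    (s t : ℝ) (hs : s ∈ J) (ht : t ∈ J) :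
    s * f' s / f s * Real.log (t / s) ≤ Real.log (f t / f s) := by
  have hs0 : 0 < s := hJ hs
  have ht0 : 0 < t := hJ ht
  have hfs : 0 < f s := hpos s hs
  have hft : 0 < f t := hpos t ht
  -- the "geometric mean" path
  set m : ℝ → ℝ := fun l => Real.exp ((1 - l) * Real.log s + l * Real.log t) with hm
  have hm0 : m 0 = s := by simp [hm, Real.exp_log hs0]
  have hmrpow : ∀ l : ℝ, m l = s ^ (1 - l) * t ^ l := by
    intro l
    rw [hm, Real.rpow_def_of_pos hs0, Real.rpow_def_of_pos ht0, ← Real.exp_add]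
    ring_nf
  have hlin : ∀ (u v : ℝ), HasDerivAt (fun l : ℝ => (1 - l) * u + l * v) (v - u) 0 := by
    intro u v
    have h1 : HasDerivAt (fun l : ℝ => (1 - l) * u + l * v) ((-1) * u + 1 * v) 0 :=
      (((hasDerivAt_id 0).const_sub 1).mul_const u).add ((hasDerivAt_id 0).mul_const v)
    convert h1 using 1; ring
  have hmd : HasDerivAt m (s * (Real.log t - Real.log s)) 0 := by
    have := (hlin (Real.log s) (Real.log t)).exp
    simpa [Real.exp_log hs0] using this
  -- F = f ∘ m
  have hFd : HasDerivAt (fun l => f (m l)) (f' s * (s * (Real.log t - Real.log s))) 0 := by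
    have hf : HasDerivAt f (f' s) (m 0) := hm0 ▸ hderiv s hs
    exact hf.comp 0 hmd
  -- G
  set G : ℝ → ℝ := fun l => Real.exp ((1 - l) * Real.log (f s) + l * Real.log (f t)) with hG
  have hG0 : G 0 = f s := by simp [hG, Real.exp_log hfs]
  have hGrpow : ∀ l : ℝ, G l = f s ^ (1 - l) * f t ^ l := by
    intro l
    rw [hG, Real.rpow_def_of_pos hfs, Real.rpow_def_of_pos hft, ← Real.exp_add]
    ring_nf
  have hGd : HasDerivAt G (f s * (Real.log (f t) - Real.log (f s))) 0 := by
    have := (hlin (Real.log (f s)) (Real.log (f t))).exp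
    simpa [hG, Real.exp_log hfs] using this
  -- difference
  have hD : 0 ≤ f s * (Real.log (f t) - Real.log (f s))
      - f' s * (s * (Real.log t - Real.log s)) := by
    apply aux_deriv_nonneg (h := fun l => G l - f (m l)) (hGd.sub hFd)
    · simp [hG0, hm0]
    · intro l hl
      have := hgc s hs t ht l hl.1.le hl.2
      rw [← hmrpow, ← hGrpow] at this
      linarith
  have hstep : f' s * (s * (Real.log t - Real.log s))
      ≤ f s * (Real.log (f t) - Real.log (f s)) := by linarith
  rw [Real.log_div ht0.ne' hs0.ne', Real.log_div hft.ne' hfs.ne',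
    div_mul_eq_mul_div, div_le_iff₀ hfs]
  nlinarith [hstep]

theorem stmt_9 (J : Set ℝ) (hJ : J ⊆ Set.Ioi (0 : ℝ)) (f f' : ℝ → ℝ)
    (hpos : ∀ x ∈ J, 0 < f x)
    (hderiv : ∀ x ∈ J, HasDerivAt f (f' x) x)
    (hgc : ∀ a ∈ J, ∀ b ∈ J, ∀ l : ℝ, 0 ≤ l → l ≤ 1 →
      f (a ^ (1 - l) * b ^ l) ≤ f a ^ (1 - l) * f b ^ l)
    (s t : ℝ) (hs : s ∈ J) (ht : t ∈ J) :
    (t / s) ^ (s * f' s / f s) ≤ f t / f s ∧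
      f t / f s ≤ (t / s) ^ (t * f' t / f t) := by
  have hs0 : 0 < s := hJ hs
  have ht0 : 0 < t := hJ ht
  have hfs : 0 < f s := hpos s hs
  have hft : 0 < f t := hpos t ht
  have k1 := aux_key J hJ f f' hpos hderiv hgc s t hs ht
  have k2 := aux_key J hJ f f' hpos hderiv hgc t s ht hs
  have e1 : Real.log (s / t) = -Real.log (t / s) := by
    rw [← Real.log_inv, inv_div]
  have e2 : Real.log (f s / f t) = -Real.log (f t / f s) := by
    rw [← Real.log_inv, inv_div]
  rw [e1, e2] at k2
  constructor
  · rw [Real.rpow_def_of_pos (div_pos ht0 hs0)]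
    calc Real.exp (Real.log (t / s) * (s * f' s / f s))
        ≤ Real.exp (Real.log (f t / f s)) := by
          apply Real.exp_le_exp.mpr; linarith [k1, mul_comm (Real.log (t / s)) (s * f' s / f s)]
      _ = f t / f s := Real.exp_log (div_pos hft hfs)
  · rw [Real.rpow_def_of_pos (div_pos ht0 hs0)]
    calc f t / f s = Real.exp (Real.log (f t / f s)) := (Real.exp_log (div_pos hft hfs)).symm
      _ ≤ Real.exp (Real.log (t / s) * (t * f' t / f t)) := by
          apply Real.exp_le_exp.mpr
          have : Real.log (f t / f s) ≤ t * f' t / f t * Real.log (t / s) := by linarith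
          linarith [mul_comm (Real.log (t / s)) (t * f' t / f t)]
end

section
/- Let g : J → (0,∞) be geometrically convex on an interval J ⊂ (0,∞) and let a, b ∈ J. Then the function f(t) := g(a^(1-t) b^t) / (g(a)^(1-t) g(b)^t) is log-convex on [0,1] (it satisfies midpoint log-convexity f((s+t)/2) ≤ √(f(s)f(t))). -/
open Real Set

/-! The path `u ↦ a ^ (1 - u) * b ^ u` sends affine combinations of exponents to weighted
geometric means. Hence geometric convexity of `g` makes
`u ↦ g (a ^ (1 - u) * b ^ u)` log-convex, while the denominator `g a ^ (1 - u) * g b ^ u` is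
log-affine, so the quotient is log-convex; the weight `1 / 2` gives the midpoint inequality. -/

noncomputable def geomInterp (a b u : ℝ) : ℝ := a ^ (1 - u) * b ^ u

def GeomConvexOn (J : Set ℝ) (g : ℝ → ℝ) : Prop :=
  ∀ x ∈ J, ∀ y ∈ J, ∀ l : ℝ, 0 ≤ l → l ≤ 1 → g (geomInterp x y l) ≤ geomInterp (g x) (g y) l

lemma geomInterp_pos {a b : ℝ} (ha : 0 < a) (hb : 0 < b) (u : ℝ) : 0 < geomInterp a b u := by
  unfold geomInterp; positivity

lemma geomInterp_self {a : ℝ} (ha : 0 < a) (u : ℝ) : geomInterp a a u = a := by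
  rw [geomInterp, ← rpow_add ha, sub_add_cancel, rpow_one]

lemma geomInterp_mem_uIcc {a b u : ℝ} (ha : 0 < a) (hb : 0 < b) (hu0 : 0 ≤ u) (hu1 : u ≤ 1) :
    geomInterp a b u ∈ uIcc a b := by
  have h1u : 0 ≤ 1 - u := by linarith
  constructor
  · calc min a b = geomInterp (min a b) (min a b) u := (geomInterp_self (lt_min ha hb) u).symm
      _ ≤ geomInterp a b u := by unfold geomInterp; gcongr <;> simp
  · calc geomInterp a b u ≤ geomInterp (max a b) (max a b) u := by
          unfold geomInterp; gcongr <;> simp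
      _ = max a b := geomInterp_self (ha.trans_le (le_max_left a b)) u

lemma geomInterp_geomInterp {a b : ℝ} (ha : 0 < a) (hb : 0 < b) (s t l : ℝ) :
    geomInterp (geomInterp a b s) (geomInterp a b t) l =
      geomInterp a b ((1 - l) * s + l * t) := by
  simp only [geomInterp, rpow_def_of_pos ha, rpow_def_of_pos hb, ← exp_add,
    rpow_def_of_pos (exp_pos _), log_exp]
  ring_nf

lemma geomInterp_div {x x' y y' : ℝ} (hx : 0 ≤ x) (hx' : 0 ≤ x') (hy : 0 ≤ y) (hy' : 0 ≤ y')
    (l : ℝ) : geomInterp (x / x') (y / y') l = geomInterp x y l / geomInterp x' y' l := by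
  rw [geomInterp, div_rpow hx hx', div_rpow hy hy', div_mul_div_comm, geomInterp, geomInterp]

lemma geomInterp_half {x y : ℝ} (hx : 0 ≤ x) (hy : 0 ≤ y) : geomInterp x y (1 / 2) = √(x * y) := by
  rw [geomInterp, sqrt_eq_rpow, mul_rpow hx hy]
  norm_num

lemma Convex.geomInterp_mem {J : Set ℝ} (hJc : Convex ℝ J) (hJ : J ⊆ Ioi 0) {a b u : ℝ}
    (ha : a ∈ J) (hb : b ∈ J) (hu : u ∈ Icc (0 : ℝ) 1) : geomInterp a b u ∈ J :=
  hJc.ordConnected.uIcc_subset ha hb (geomInterp_mem_uIcc (hJ ha) (hJ hb) hu.1 hu.2)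

section

variable {J : Set ℝ} {g : ℝ → ℝ} {a b s t l : ℝ}

lemma GeomConvexOn.comp_geomInterp_le (hgc : GeomConvexOn J g) (hJc : Convex ℝ J)
    (hJ : J ⊆ Ioi 0) (ha : a ∈ J) (hb : b ∈ J) (hs : s ∈ Icc (0 : ℝ) 1)
    (ht : t ∈ Icc (0 : ℝ) 1) (hl0 : 0 ≤ l) (hl1 : l ≤ 1) :
    g (geomInterp a b ((1 - l) * s + l * t)) ≤
      geomInterp (g (geomInterp a b s)) (g (geomInterp a b t)) l := by
  rw [← geomInterp_geomInterp (hJ ha) (hJ hb)]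
  exact hgc _ (hJc.geomInterp_mem hJ ha hb hs) _ (hJc.geomInterp_mem hJ ha hb ht) l hl0 hl1

lemma GeomConvexOn.div_geomInterp_le (hgc : GeomConvexOn J g) (hJc : Convex ℝ J)
    (hJ : J ⊆ Ioi 0) (hpos : ∀ x ∈ J, 0 < g x) (ha : a ∈ J) (hb : b ∈ J)
    (hs : s ∈ Icc (0 : ℝ) 1) (ht : t ∈ Icc (0 : ℝ) 1) (hl0 : 0 ≤ l) (hl1 : l ≤ 1) :
    g (geomInterp a b ((1 - l) * s + l * t)) / geomInterp (g a) (g b) ((1 - l) * s + l * t) ≤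
      geomInterp (g (geomInterp a b s) / geomInterp (g a) (g b) s)
        (g (geomInterp a b t) / geomInterp (g a) (g b) t) l := by
  have hga := hpos a ha
  have hgb := hpos b hb
  have hgJ {u} (hu : u ∈ Icc (0 : ℝ) 1) := (hpos _ (hJc.geomInterp_mem hJ ha hb hu)).le
  rw [← geomInterp_geomInterp hga hgb, geomInterp_div (hgJ hs) (geomInterp_pos hga hgb s).le
    (hgJ ht) (geomInterp_pos hga hgb t).le]
  exact div_le_div_of_nonneg_right (hgc.comp_geomInterp_le hJc hJ ha hb hs ht hl0 hl1)
    (geomInterp_pos (geomInterp_pos hga hgb s) (geomInterp_pos hga hgb t) l).le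

end

theorem stmt_10 (J : Set ℝ) (hJ : J ⊆ Set.Ioi (0 : ℝ)) (hJc : Convex ℝ J)
    (g : ℝ → ℝ) (hpos : ∀ x ∈ J, 0 < g x)
    (hgc : ∀ x ∈ J, ∀ y ∈ J, ∀ l : ℝ, 0 ≤ l → l ≤ 1 →
      g (x ^ (1 - l) * y ^ l) ≤ g x ^ (1 - l) * g y ^ l)
    (a b : ℝ) (ha : a ∈ J) (hb : b ∈ J) :
    ∀ s ∈ Set.Icc (0 : ℝ) 1, ∀ t ∈ Set.Icc (0 : ℝ) 1,
      (fun u : ℝ => g (a ^ (1 - u) * b ^ u) / (g a ^ (1 - u) * g b ^ u)) ((s + t) / 2) ≤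
        Real.sqrt ((fun u : ℝ => g (a ^ (1 - u) * b ^ u) / (g a ^ (1 - u) * g b ^ u)) s *
          (fun u : ℝ => g (a ^ (1 - u) * b ^ u) / (g a ^ (1 - u) * g b ^ u)) t) := by
  intro s hs t ht
  have hf_nonneg {u} (hu : u ∈ Icc (0 : ℝ) 1) :
      0 ≤ g (geomInterp a b u) / geomInterp (g a) (g b) u :=
    div_nonneg (hpos _ (hJc.geomInterp_mem hJ ha hb hu)).le
      (geomInterp_pos (hpos a ha) (hpos b hb) u).le
  have hf := GeomConvexOn.div_geomInterp_le hgc hJc hJ hpos ha hb hs ht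
    (l := 1 / 2) (by norm_num) (by norm_num)
  rwa [geomInterp_half (hf_nonneg hs) (hf_nonneg ht),
    show (1 - 1 / 2) * s + 1 / 2 * t = (s + t) / 2 by ring] at hf
end

section
/- Let f : J → (0,∞) be a differentiable log-convex function, a₁,...,aₙ ∈ J, and t₁,...,tₙ ≥ 0 with Σtᵢ = 1. Set A := Σᵢ tᵢaᵢ. Then L·f(A) ≤ Σᵢ tᵢ f(aᵢ) ≤ R·f(A), where L := Σᵢ tᵢ exp(f'(A)(aᵢ - A)/f(A)) and R := Σᵢ tᵢ exp(f'(aᵢ)(aᵢ - A)/f(aᵢ)). -/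
open Real Finset

lemma tangent_le' {S : Set ℝ} {g : ℝ → ℝ} {x y g' : ℝ} (hg : ConvexOn ℝ S g)
    (hx : x ∈ S) (hy : y ∈ S) (hd : HasDerivAt g g' x) :
    g x + g' * (y - x) ≤ g y := by
  rcases lt_trichotomy x y with h | h | h
  · have := hg.le_slope_of_hasDerivAt hx hy h hd
    rw [slope_def_field, le_div_iff₀ (sub_pos.2 h)] at this
    nlinarith
  · simp [h]
  · have := hg.slope_le_of_hasDerivAt hy hx h hd
    rw [slope_def_field, div_le_iff₀ (sub_pos.2 h)] at this
    nlinarith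

lemma exp_tangent_le {J : Set ℝ} {f f' : ℝ → ℝ} (hJc : Convex ℝ J)
    (hpos : ∀ x ∈ J, 0 < f x) (hderiv : ∀ x ∈ J, HasDerivAt f (f' x) x)
    (hlc : ConvexOn ℝ J (fun x => Real.log (f x))) {x y : ℝ} (hx : x ∈ J) (hy : y ∈ J) :
    f x * Real.exp (f' x * (y - x) / f x) ≤ f y := by
  have hfx := hpos x hx
  have hd : HasDerivAt (fun x => Real.log (f x)) (f' x / f x) x :=
    (hderiv x hx).log hfx.ne'
  have h := tangent_le' hlc hx hy hd
  have e := Real.exp_le_exp.2 h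
  rwa [Real.exp_add, Real.exp_log hfx, Real.exp_log (hpos y hy), div_mul_eq_mul_div] at e

theorem stmt_11 (J : Set ℝ) (hJc : Convex ℝ J) (f f' : ℝ → ℝ)
    (hpos : ∀ x ∈ J, 0 < f x)
    (hderiv : ∀ x ∈ J, HasDerivAt f (f' x) x)
    (hlc : ConvexOn ℝ J (fun x => Real.log (f x)))
    (n : ℕ) (a : Fin n → ℝ) (t : Fin n → ℝ)
    (ha : ∀ i, a i ∈ J) (ht : ∀ i, 0 ≤ t i) (ht1 : ∑ i, t i = 1) :
    (∑ i, t i * Real.exp (f' (∑ j, t j * a j) * (a i - ∑ j, t j * a j) / f (∑ j, t j * a j))) *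
        f (∑ j, t j * a j) ≤ ∑ i, t i * f (a i) ∧
      ∑ i, t i * f (a i) ≤
        (∑ i, t i * Real.exp (f' (a i) * (a i - ∑ j, t j * a j) / f (a i))) *
          f (∑ j, t j * a j) := by
  set A := ∑ j, t j * a j with hA
  have hAJ : A ∈ J := by
    apply hJc.sum_mem (fun i _ => ht i) ht1 (fun i _ => ha i)
  have hfA := hpos A hAJ
  constructor
  · rw [Finset.sum_mul]
    apply Finset.sum_le_sum
    intro i _
    rw [mul_assoc]
    apply mul_le_mul_of_nonneg_left _ (ht i)
    rw [mul_comm]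
    exact exp_tangent_le hJc hpos hderiv hlc hAJ (ha i)
  · rw [Finset.sum_mul]
    apply Finset.sum_le_sum
    intro i _
    rw [mul_assoc]
    apply mul_le_mul_of_nonneg_left _ (ht i)
    have hfi := hpos (a i) (ha i)
    have h := exp_tangent_le hJc hpos hderiv hlc (ha i) hAJ
    -- h : f (a i) * exp (f' (a i) * (A - a i) / f (a i)) ≤ f A
    rw [← le_div_iff₀ (Real.exp_pos _)] at h
    calc f (a i) ≤ f A / Real.exp (f' (a i) * (A - a i) / f (a i)) := h
      _ = Real.exp (f' (a i) * (a i - A) / f (a i)) * f A := by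
          rw [div_eq_mul_inv, ← Real.exp_neg, mul_comm,
            show -(f' (a i) * (A - a i) / f (a i)) = f' (a i) * (a i - A) / f (a i) by ring]
end

section
/- Let f : J → (0,∞) be a differentiable geometrically convex function on an interval J ⊂ (0,∞), a₁,...,aₙ ∈ J, t₁,...,tₙ ≥ 0 with Σtᵢ = 1, and A := Σᵢ tᵢaᵢ ∈ J. Then L̂·f(A) ≤ Σᵢ tᵢ f(aᵢ) ≤ R̂·f(A), where L̂ := Σᵢ tᵢ (aᵢ/A)^(A f'(A)/f(A)) and R̂ := Σᵢ tᵢ (aᵢ/A)^(aᵢ f'(aᵢ)/f(aᵢ)). -/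
open Real Filter Topology

/-!
Along the geometric segment `l ↦ x ^ (1 - l) * y ^ l` a geometrically convex `f` lies below the
geometric chord `l ↦ f x ^ (1 - l) * f y ^ l`, and the two agree at `l = 0`, so their right
derivatives at `0` compare: `f' x * x * log (y / x) ≤ f x * log (f y / f x)`. Exponentiating
gives the tangent bound `(y / x) ^ (x * f' x / f x) * f x ≤ f y`. Applied with `(x, y) = (A, aᵢ)`
it gives the left inequality term by term, and applied with `(x, y) = (aᵢ, A)` the right one.
-/

theorem HasDerivWithinAt.le_of_eventuallyLE_of_eq {φ g : ℝ → ℝ} {φ' g' a : ℝ}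
    (hφ : HasDerivWithinAt φ φ' (Set.Ioi a) a) (hg : HasDerivWithinAt g g' (Set.Ioi a) a)
    (heq : φ a = g a) (hle : φ ≤ᶠ[𝓝[>] a] g) : φ' ≤ g' := by
  rw [hasDerivWithinAt_iff_tendsto_slope' Set.self_notMem_Ioi] at hφ hg
  refine le_of_tendsto_of_tendsto hφ hg ?_
  filter_upwards [hle, self_mem_nhdsWithin] with l hl (hla : a < l)
  rw [slope_def_field, slope_def_field, heq]
  gcongr

/-- For positive `f`, this is convexity of `log ∘ f ∘ exp` on `log '' J`. -/
def GeometricallyConvexOn (J : Set ℝ) (f : ℝ → ℝ) : Prop :=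
  ∀ x ∈ J, ∀ y ∈ J, ∀ l : ℝ, 0 ≤ l → l ≤ 1 →
    f (x ^ (1 - l) * y ^ l) ≤ f x ^ (1 - l) * f y ^ l

theorem hasDerivAt_rpow_one_sub_mul_rpow {x y : ℝ} (hx : 0 < x) (hy : 0 < y) :
    HasDerivAt (fun l : ℝ => x ^ (1 - l) * y ^ l) (x * (log y - log x)) 0 := by
  refine ((((hasDerivAt_id (0 : ℝ)).const_sub 1).const_rpow hx).mul
    ((hasDerivAt_id (0 : ℝ)).const_rpow hy)).congr_deriv ?_
  simp only [id, sub_zero, rpow_one, rpow_zero]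
  ring

theorem GeometricallyConvexOn.mul_log_div_le_log_div {J : Set ℝ} {f : ℝ → ℝ} {f' x y : ℝ}
    (hgc : GeometricallyConvexOn J f) (hx : x ∈ J) (hy : y ∈ J) (hx0 : 0 < x) (hy0 : 0 < y)
    (hfx : 0 < f x) (hfy : 0 < f y) (hf : HasDerivAt f f' x) :
    x * f' / f x * log (y / x) ≤ log (f y / f x) := by
  have hφ : HasDerivAt (fun l : ℝ => f (x ^ (1 - l) * y ^ l)) (f' * (x * (log y - log x))) 0 :=
    hf.comp_of_eq 0 (hasDerivAt_rpow_one_sub_mul_rpow hx0 hy0) (by simp)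
  have hg : HasDerivAt (fun l : ℝ => f x ^ (1 - l) * f y ^ l)
      (f x * (log (f y) - log (f x))) 0 := hasDerivAt_rpow_one_sub_mul_rpow hfx hfy
  have hle := hφ.hasDerivWithinAt.le_of_eventuallyLE_of_eq hg.hasDerivWithinAt (by simp) <| by
    filter_upwards [Ioo_mem_nhdsGT (zero_lt_one' ℝ)] with l hl
    exact hgc x hx y hy l hl.1.le hl.2.le
  rw [log_div hy0.ne' hx0.ne', log_div hfy.ne' hfx.ne', div_mul_eq_mul_div, div_le_iff₀ hfx]
  linarith

theorem GeometricallyConvexOn.rpow_mul_le {J : Set ℝ} {f : ℝ → ℝ} {f' x y : ℝ}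
    (hgc : GeometricallyConvexOn J f) (hx : x ∈ J) (hy : y ∈ J) (hx0 : 0 < x) (hy0 : 0 < y)
    (hfx : 0 < f x) (hfy : 0 < f y) (hf : HasDerivAt f f' x) :
    (y / x) ^ (x * f' / f x) * f x ≤ f y := by
  rw [← le_div_iff₀ hfx, rpow_def_of_pos (by positivity), mul_comm,
    ← le_log_iff_exp_le (by positivity)]
  exact hgc.mul_log_div_le_log_div hx hy hx0 hy0 hfx hfy hf

theorem GeometricallyConvexOn.le_rpow_mul {J : Set ℝ} {f : ℝ → ℝ} {f' x y : ℝ}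
    (hgc : GeometricallyConvexOn J f) (hx : x ∈ J) (hy : y ∈ J) (hx0 : 0 < x) (hy0 : 0 < y)
    (hfx : 0 < f x) (hfy : 0 < f y) (hf : HasDerivAt f f' y) :
    f y ≤ (y / x) ^ (y * f' / f y) * f x := by
  have := hgc.mul_log_div_le_log_div hy hx hy0 hx0 hfy hfx hf
  rw [← div_le_iff₀ hfx, rpow_def_of_pos (by positivity), mul_comm,
    ← log_le_iff_le_exp (by positivity)]
  rw [← inv_div y x, log_inv, ← inv_div (f y) (f x), log_inv] at this
  linarith

theorem stmt_12_general (J : Set ℝ) (hJ : J ⊆ Set.Ioi (0 : ℝ)) (f f' : ℝ → ℝ)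
    (hpos : ∀ x ∈ J, 0 < f x)
    (hderiv : ∀ x ∈ J, HasDerivAt f (f' x) x)
    (hgc : ∀ x ∈ J, ∀ y ∈ J, ∀ l : ℝ, 0 ≤ l → l ≤ 1 →
      f (x ^ (1 - l) * y ^ l) ≤ f x ^ (1 - l) * f y ^ l)
    (n : ℕ) (a : Fin n → ℝ) (t : Fin n → ℝ)
    (ha : ∀ i, a i ∈ J) (ht : ∀ i, 0 ≤ t i)
    (hA : (∑ i, t i * a i) ∈ J) :
    (∑ i, t i * (a i / ∑ j, t j * a j) ^
          ((∑ j, t j * a j) * f' (∑ j, t j * a j) / f (∑ j, t j * a j))) *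
        f (∑ j, t j * a j) ≤ ∑ i, t i * f (a i) ∧
      ∑ i, t i * f (a i) ≤
        (∑ i, t i * (a i / ∑ j, t j * a j) ^ (a i * f' (a i) / f (a i))) *
          f (∑ j, t j * a j) := by
  set A := ∑ j, t j * a j
  have hgc : GeometricallyConvexOn J f := hgc
  simp only [Finset.sum_mul, mul_assoc]
  constructor <;> refine Finset.sum_le_sum fun i _ => mul_le_mul_of_nonneg_left ?_ (ht i)
  · exact hgc.rpow_mul_le hA (ha i) (hJ hA) (hJ (ha i)) (hpos A hA) (hpos _ (ha i)) (hderiv A hA)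
  · exact hgc.le_rpow_mul hA (ha i) (hJ hA) (hJ (ha i)) (hpos A hA) (hpos _ (ha i))
      (hderiv _ (ha i))

theorem stmt_12 (J : Set ℝ) (hJ : J ⊆ Set.Ioi (0 : ℝ)) (f f' : ℝ → ℝ)
    (hpos : ∀ x ∈ J, 0 < f x)
    (hderiv : ∀ x ∈ J, HasDerivAt f (f' x) x)
    (hgc : ∀ x ∈ J, ∀ y ∈ J, ∀ l : ℝ, 0 ≤ l → l ≤ 1 →
      f (x ^ (1 - l) * y ^ l) ≤ f x ^ (1 - l) * f y ^ l)
    (n : ℕ) (a : Fin n → ℝ) (t : Fin n → ℝ)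
    (ha : ∀ i, a i ∈ J) (ht : ∀ i, 0 ≤ t i) (ht1 : ∑ i, t i = 1)
    (hA : (∑ i, t i * a i) ∈ J) :
    (∑ i, t i * (a i / ∑ j, t j * a j) ^
          ((∑ j, t j * a j) * f' (∑ j, t j * a j) / f (∑ j, t j * a j))) *
        f (∑ j, t j * a j) ≤ ∑ i, t i * f (a i) ∧
      ∑ i, t i * f (a i) ≤
        (∑ i, t i * (a i / ∑ j, t j * a j) ^ (a i * f' (a i) / f (a i))) *
          f (∑ j, t j * a j) :=
  stmt_12_general J hJ f f' hpos hderiv hgc n a t ha ht hA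
end

section
/- Let 0 ≤ a < b, let f, g : [a,b] → [0,∞) be differentiable with f monotone increasing and concave, g convex, f(x) ≥ g(x) for all x ∈ [a,b], and f(b) - f(a) ≥ M(g(b) - g(a)) ≥ 0 where M := (max_{x∈[a,b]} f(x)) / (min_{x∈[a,b]} g(x)) (assuming min g > 0). Then for every t ∈ [a,b], (g(b) - g(a)) f(t) ≤ (f(b) - f(a)) g(t). -/
open Set

theorem stmt_14 (a b : ℝ) (ha : 0 ≤ a) (hab : a < b) (f g : ℝ → ℝ)
    (hf0 : ∀ x ∈ Icc a b, 0 ≤ f x) (hg0 : ∀ x ∈ Icc a b, 0 < g x)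
    (hfd : DifferentiableOn ℝ f (Icc a b)) (hgd : DifferentiableOn ℝ g (Icc a b))
    (hfm : MonotoneOn f (Icc a b)) (hfc : ConcaveOn ℝ (Icc a b) f)
    (hgc : ConvexOn ℝ (Icc a b) g)
    (hfg : ∀ x ∈ Icc a b, g x ≤ f x)
    (hga : 0 ≤ g b - g a)
    (hMain : sSup (f '' Icc a b) / sInf (g '' Icc a b) * (g b - g a) ≤ f b - f a) :
    ∀ t ∈ Icc a b, (g b - g a) * f t ≤ (f b - f a) * g t := by
  intro t ht
  set S := sSup (f '' Icc a b) with hSdef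
  set I := sInf (g '' Icc a b) with hIdef
  have hcomp : IsCompact (Icc a b) := isCompact_Icc
  have hfcont : ContinuousOn f (Icc a b) := hfd.continuousOn
  have hgcont : ContinuousOn g (Icc a b) := hgd.continuousOn
  have hne : (Icc a b).Nonempty := ⟨a, le_refl a, hab.le⟩
  have hfS : f t ≤ S := le_csSup ((hcomp.image_of_continuousOn hfcont).bddAbove)
    (mem_image_of_mem f ht)
  have hIg : I ≤ g t := csInf_le ((hcomp.image_of_continuousOn hgcont).bddBelow)
    (mem_image_of_mem g ht)
  have hImem : I ∈ g '' Icc a b :=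
    (hcomp.image_of_continuousOn hgcont).isClosed.csInf_mem (hne.image g)
      (hcomp.image_of_continuousOn hgcont).bddBelow
  obtain ⟨x, hx, hgx⟩ := hImem
  have hIpos : 0 < I := hgx ▸ hg0 x hx
  have hS0 : 0 ≤ S := le_trans (hf0 t ht) hfS
  have hdiv : S / I * I = S := div_mul_cancel₀ S hIpos.ne'
  have hgt : 0 < g t := hg0 t ht
  nlinarith [mul_le_mul_of_nonneg_right hMain hgt.le,
    mul_le_mul_of_nonneg_left hIg (div_nonneg hS0 hIpos.le),
    mul_le_mul_of_nonneg_left hfS hga]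
end

section
/- For fixed x ≥ 1, the function t ↦ ln_t(x) := (x^t - 1)/t is convex on (0,∞) (and on (-∞,0)); for 0 < x ≤ 1 it is concave. -/
open Real Set

lemma aux_convex_integral (c d : ℝ) (hc : 0 < c) (hcd : c ≤ d) :
    ConvexOn ℝ Set.univ (fun t : ℝ => ∫ u in c..d, u ^ (t - 1)) := by
  have h0 : ∀ r : ℝ, (0 : ℝ) ∉ Set.uIcc c d := by
    intro r h
    have := (Set.mem_uIcc.mp h)
    rcases this with ⟨h1, _⟩ | ⟨h1, _⟩ <;> linarith
  have hint : ∀ r : ℝ, IntervalIntegrable (fun u : ℝ => u ^ r) MeasureTheory.volume c d :=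
    fun r => intervalIntegral.intervalIntegrable_rpow (Or.inr (h0 r))
  refine ⟨convex_univ, ?_⟩
  intro a _ b _ θ μ hθ hμ hθμ
  simp only [smul_eq_mul]
  have key : ∀ u ∈ Set.Icc c d,
      u ^ (θ * a + μ * b - 1) ≤ θ * u ^ (a - 1) + μ * u ^ (b - 1) := by
    intro u hu
    have hu0 : 0 < u := lt_of_lt_of_le hc hu.1
    have hexp : θ * a + μ * b - 1 = (a - 1) * θ + (b - 1) * μ := by
      have : θ * a + μ * b - 1 = θ * a + μ * b - (θ + μ) := by rw [hθμ]
      rw [this]; ring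
    rw [hexp, Real.rpow_add hu0, Real.rpow_mul hu0.le, Real.rpow_mul hu0.le]
    exact Real.geom_mean_le_arith_mean2_weighted hθ hμ
      (Real.rpow_nonneg hu0.le _) (Real.rpow_nonneg hu0.le _) hθμ
  calc ∫ u in c..d, u ^ (θ * a + μ * b - 1)
      ≤ ∫ u in c..d, (θ * u ^ (a - 1) + μ * u ^ (b - 1)) := by
        apply intervalIntegral.integral_mono_on hcd (hint _)
          (((hint (a-1)).const_mul θ).add ((hint (b-1)).const_mul μ)) key
    _ = (θ * ∫ u in c..d, u ^ (a - 1)) + μ * ∫ u in c..d, u ^ (b - 1) := by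
        rw [intervalIntegral.integral_add ((hint (a-1)).const_mul θ)
          ((hint (b-1)).const_mul μ), intervalIntegral.integral_const_mul,
          intervalIntegral.integral_const_mul]

lemma aux_repr (x : ℝ) (hx : 0 < x) (t : ℝ) (ht : t ≠ 0) :
    (x ^ t - 1) / t = ∫ u in (1:ℝ)..x, u ^ (t - 1) := by
  have h : (-1 : ℝ) < t - 1 ∨ (t - 1 ≠ -1 ∧ (0 : ℝ) ∉ Set.uIcc 1 x) := by
    rcases lt_or_gt_of_ne ht with h | h
    · refine Or.inr ⟨by intro hc; apply ht; linarith, ?_⟩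
      intro hc
      rcases Set.mem_uIcc.mp hc with ⟨h1, _⟩ | ⟨h1, _⟩ <;> linarith
    · exact Or.inl (by linarith)
  rw [integral_rpow h]
  have : t - 1 + 1 = t := by ring
  rw [this, Real.one_rpow]

theorem stmt_15 (x : ℝ) (hx : 0 < x) :
    (1 ≤ x →
      ConvexOn ℝ (Set.Ioi (0 : ℝ)) (fun t : ℝ => (x ^ t - 1) / t) ∧
        ConvexOn ℝ (Set.Iio (0 : ℝ)) (fun t : ℝ => (x ^ t - 1) / t)) ∧
    (x ≤ 1 →
      ConcaveOn ℝ (Set.Ioi (0 : ℝ)) (fun t : ℝ => (x ^ t - 1) / t) ∧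
        ConcaveOn ℝ (Set.Iio (0 : ℝ)) (fun t : ℝ => (x ^ t - 1) / t)) := by
  constructor
  · intro hx1
    have hconv := aux_convex_integral 1 x one_pos hx1
    constructor
    · exact ((hconv.subset (Set.subset_univ _) (convex_Ioi 0)).congr
        (fun t ht => (aux_repr x hx t (ne_of_gt ht)).symm))
    · exact ((hconv.subset (Set.subset_univ _) (convex_Iio 0)).congr
        (fun t ht => (aux_repr x hx t (ne_of_lt ht)).symm))
  · intro hx1
    have hconv := aux_convex_integral x 1 hx hx1
    have hconc : ConcaveOn ℝ Set.univ (fun t : ℝ => ∫ u in (1:ℝ)..x, u ^ (t - 1)) := by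
      have := hconv.neg
      refine this.congr fun t _ => ?_
      simp [intervalIntegral.integral_symm x 1]
    constructor
    · exact ((hconc.subset (Set.subset_univ _) (convex_Ioi 0)).congr
        (fun t ht => (aux_repr x hx t (ne_of_gt ht)).symm))
    · exact ((hconc.subset (Set.subset_univ _) (convex_Iio 0)).congr
        (fun t ht => (aux_repr x hx t (ne_of_lt ht)).symm))
end

section
/- For every fixed x > 0, the function t ↦ ln_t(x) := (x^t - 1)/t is monotone increasing on ℝ \ {0}, and log-convex in t (i.e., t ↦ log((x^t - 1)/t) is convex where x ≠ 1). -/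
/-!
For `t ≠ 0`, `ln_t x = (x ^ t - x ^ 0) / (t - 0)` is the slope from `0` of the convex function
`t ↦ x ^ t`, hence monotone in `t`. Moreover `ln_t x = log x * ∫₀¹ exp (t * log x * s) ds`, i.e.
`log x` times the moment generating function of `s ↦ log x * s` under the uniform distribution on
`[0, 1]`; so `log |ln_t x|` is a constant plus a cumulant generating function, which is convex by
Hölder's inequality.
-/

open Real Set

namespace ProbabilityTheory

open MeasureTheory

variable {Ω : Type*} [MeasurableSpace Ω] {μ : Measure Ω} {X : Ω → ℝ}

lemma memLp_exp_mul_rpow {c r : ℝ} (hr : 0 < r) (hc : Integrable (fun ω ↦ exp (c * X ω)) μ) :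
    MemLp (fun ω ↦ exp (c * X ω) ^ r) (ENNReal.ofReal (1 / r)) μ := by
  refine (integrable_norm_rpow_iff
    ((continuous_rpow_const hr.le).comp_aestronglyMeasurable hc.1) (by simp [hr])
    ENNReal.ofReal_ne_top).1 ?_
  convert hc using 2 with ω
  rw [norm_of_nonneg (by positivity), ENNReal.toReal_ofReal (by positivity), one_div,
    rpow_rpow_inv (exp_pos _).le hr.ne']

/-- Hölder's inequality with exponents `1 / p` and `1 / q`. -/
lemma mgf_mul_add_mul_le {a b p q : ℝ} (ha : Integrable (fun ω ↦ exp (a * X ω)) μ)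
    (hb : Integrable (fun ω ↦ exp (b * X ω)) μ) (hp : 0 < p) (hq : 0 < q) (hpq : p + q = 1) :
    mgf X μ (p * a + q * b) ≤ mgf X μ a ^ p * mgf X μ b ^ q := by
  have holder := integral_mul_le_Lp_mul_Lq_of_nonneg (holderConjugate_one_div hp hq hpq)
    (ae_of_all μ fun ω ↦ by positivity) (ae_of_all μ fun ω ↦ by positivity)
    (memLp_exp_mul_rpow hp ha) (memLp_exp_mul_rpow hq hb)
  simp only [one_div, rpow_rpow_inv (exp_pos _).le hp.ne', rpow_rpow_inv (exp_pos _).le hq.ne',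
    inv_inv] at holder
  refine le_of_eq_of_le (integral_congr_ae (ae_of_all μ fun ω ↦ ?_)) holder
  rw [← exp_mul, ← exp_mul, ← exp_add]
  ring_nf

lemma convexOn_cgf [NeZero μ] : ConvexOn ℝ (integrableExpSet X μ) (cgf X μ) := by
  refine convexOn_iff_forall_pos.2 ⟨convex_integrableExpSet, fun a ha b hb p q hp hq hpq ↦ ?_⟩
  have hmgf : ∀ t ∈ integrableExpSet X μ, 0 < mgf X μ t := fun t ht ↦ mgf_pos' (NeZero.ne μ) ht
  calc cgf X μ (p * a + q * b) ≤ log (mgf X μ a ^ p * mgf X μ b ^ q) :=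
        log_le_log (hmgf _ (convex_integrableExpSet ha hb hp.le hq.le hpq))
          (mgf_mul_add_mul_le ha hb hp hq hpq)
    _ = p * cgf X μ a + q * cgf X μ b := by
        rw [log_mul (rpow_pos_of_pos (hmgf a ha) p).ne' (rpow_pos_of_pos (hmgf b hb) q).ne',
          log_rpow (hmgf a ha), log_rpow (hmgf b hb)]
        rfl

end ProbabilityTheory

open MeasureTheory ProbabilityTheory

instance : IsProbabilityMeasure (volume.restrict (Ioc (0 : ℝ) 1)) := ⟨by simp⟩

lemma integrableExpSet_restrict_Ioc_zero_one {X : ℝ → ℝ} (hX : Continuous X) :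
    integrableExpSet X (volume.restrict (Ioc 0 1)) = univ :=
  eq_univ_of_forall fun _ ↦ (by fun_prop : Continuous _).integrableOn_Ioc

lemma mgf_restrict_Ioc_zero_one {u : ℝ} (hu : u ≠ 0) :
    mgf (fun s ↦ s) (volume.restrict (Ioc 0 1)) u = (exp u - 1) / u := by
  rw [mgf, ← intervalIntegral.integral_of_le zero_le_one]
  simp only [intervalIntegral.integral_comp_mul_left (fun s ↦ exp s) hu, mul_zero, mul_one,
    integral_exp, exp_zero, smul_eq_mul]
  ring

/-- The generalized logarithm `ln_t x`. -/
noncomputable def genLog (t x : ℝ) : ℝ := if t = 0 then log x else (x ^ t - 1) / t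

lemma genLog_eq_log_mul_mgf {x : ℝ} (hx : 0 < x) (t : ℝ) :
    genLog t x = log x * mgf (fun s ↦ log x * s) (volume.restrict (Ioc 0 1)) t := by
  rw [mgf_const_mul]
  rcases eq_or_ne t 0 with rfl | ht
  · simp [genLog]
  rcases eq_or_ne (log x) 0 with hL | hL
  · simp [genLog, ht, rpow_def_of_pos hx, hL]
  rw [genLog, if_neg ht, rpow_def_of_pos hx, mgf_restrict_Ioc_zero_one (mul_ne_zero hL ht)]
  field_simp

lemma monotoneOn_genLog {x : ℝ} (hx : 0 < x) : MonotoneOn (genLog · x) {t | t ≠ 0} := by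
  intro a ha b hb hab
  simpa [genLog, ha.out, hb.out] using
    (convexOn_rpow_left hx).secant_mono (mem_univ 0) (mem_univ a) (mem_univ b) ha hb hab

lemma convexOn_log_genLog {x : ℝ} (hx : 0 < x) (hx1 : x ≠ 1) :
    ConvexOn ℝ univ (fun t ↦ log (genLog t x)) := by
  have hL : log x ≠ 0 := log_ne_zero_of_pos_of_ne_one hx hx1
  have hX : Continuous (log x * ·) := by fun_prop
  have hlog : (fun t ↦ log (genLog t x)) =
      fun t ↦ log (log x) + cgf (log x * ·) (volume.restrict (Ioc 0 1)) t := by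
    funext t
    rw [genLog_eq_log_mul_mgf hx,
      log_mul hL (mgf_pos (by fun_prop : Continuous _).integrableOn_Ioc).ne']
    rfl
  rw [hlog, ← integrableExpSet_restrict_Ioc_zero_one hX]
  exact (convexOn_const _ convex_integrableExpSet).add convexOn_cgf

theorem stmt_16 (x : ℝ) (hx : 0 < x) :
    MonotoneOn (fun t : ℝ => if t = 0 then Real.log x else (x ^ t - 1) / t)
        {t : ℝ | t ≠ 0} ∧
      (x ≠ 1 →
        ConvexOn ℝ Set.univ
          (fun t : ℝ =>
            Real.log (if t = 0 then Real.log x else (x ^ t - 1) / t))) :=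
  ⟨monotoneOn_genLog hx, convexOn_log_genLog hx⟩
end

section
/- For every x > 0 and 0 < t ≤ 1, log x + θ(t,x)/t ≤ ln_t(x), where θ(t,x) := min{(ln_t(x) - log x)², t²}. -/
open Real

theorem stmt_17 (x t : ℝ) (hx : 0 < x) (ht0 : 0 < t) (ht1 : t ≤ 1) :
    Real.log x + (min (((x ^ t - 1) / t - Real.log x) ^ 2) (t ^ 2)) / t ≤ (x ^ t - 1) / t := by
  set d := (x ^ t - 1) / t - Real.log x with hd
  have hxt : x ^ t = Real.exp (t * Real.log x) := by
    rw [Real.rpow_def_of_pos hx, mul_comm]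
  have hd0 : 0 ≤ d := by
    rw [hd, sub_nonneg, le_div_iff₀ ht0]
    nlinarith [Real.add_one_le_exp (t * Real.log x), hxt]
  have hmin : min (d ^ 2) (t ^ 2) ≤ t * d := by
    rcases le_total d t with h | h
    · exact le_trans (min_le_left _ _) (by nlinarith)
    · exact le_trans (min_le_right _ _) (by nlinarith)
  have : min (d ^ 2) (t ^ 2) / t ≤ d := by
    rw [div_le_iff₀ ht0]; linarith [hmin]
  linarith
end

section
/- For s, t > 0 and x ≥ 1 with x > 1 (so that ln_s x > 0), exp( ((x^s log x - ln_s x)(t - s))/(s ln_s x) ) · ln_s x ≤ ln_t x ≤ exp( ((x^t log x - ln_t x)(t - s))/(t ln_t x) ) · ln_s x. -/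
/-!
With `y = u log x` one has `ln_u x = log x · (e^y - 1) / y`, so `log (ln_u x)` is, up to an additive
constant, `φ (u log x)` for `φ = logExprel`, `φ y = log ((e^y - 1) / y)`. This `φ` is convex on
`y > 0`: `φ'' y = 1 / y² - e^y / (e^y - 1)²`, and `y² e^y ≤ (e^y - 1)²` is `|y / 2| ≤ |sinh (y / 2)|`.
The two inequalities are the tangent-line bounds `φ' a (b - a) ≤ φ b - φ a ≤ φ' b (b - a)` at
`a = s log x`, `b = t log x`, exponentiated.
-/

open Real Set

theorem ConvexOn.deriv_mul_sub_le_sub {S : Set ℝ} {f : ℝ → ℝ} {f' x y : ℝ}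
    (hf : ConvexOn ℝ S f) (hx : x ∈ S) (hy : y ∈ S) (hf' : HasDerivAt f f' x) :
    f' * (y - x) ≤ f y - f x := by
  rcases lt_trichotomy x y with hxy | rfl | hyx
  · have := hf.le_slope_of_hasDerivAt hx hy hxy hf'
    rwa [slope_def_field, le_div_iff₀ (sub_pos.2 hxy)] at this
  · simp
  · have := hf.slope_le_of_hasDerivAt hy hx hyx hf'
    rw [slope_def_field, div_le_iff₀ (sub_pos.2 hyx)] at this
    linarith

theorem ConvexOn.sub_le_deriv_mul_sub {S : Set ℝ} {f : ℝ → ℝ} {f' x y : ℝ}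
    (hf : ConvexOn ℝ S f) (hx : x ∈ S) (hy : y ∈ S) (hf' : HasDerivAt f f' y) :
    f y - f x ≤ f' * (y - x) := by
  linarith [hf.deriv_mul_sub_le_sub hy hx hf']

theorem Real.sq_mul_exp_le_sq_exp_sub_one (y : ℝ) : y ^ 2 * exp y ≤ (exp y - 1) ^ 2 := by
  have hsinh : (y / 2) ^ 2 ≤ sinh (y / 2) ^ 2 := by
    rw [sq_le_sq, abs_sinh]
    exact self_le_sinh_iff.2 (abs_nonneg _)
  have hfactor : (exp y - 1) ^ 2 = (2 * sinh (y / 2)) ^ 2 * exp y := by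
    have hhalf : exp y = exp (y / 2) * exp (y / 2) := by rw [← exp_add, add_halves]
    rw [sinh_eq, exp_neg, hhalf]
    field_simp
  rw [hfactor]
  exact mul_le_mul_of_nonneg_right (by linarith) (exp_pos y).le

noncomputable def logExprel (y : ℝ) : ℝ := log ((exp y - 1) / y)

theorem exp_sub_one_div_pos {y : ℝ} (hy : y ≠ 0) : 0 < (exp y - 1) / y := by
  rcases hy.lt_or_gt with hy | hy
  · exact div_pos_of_neg_of_neg (by linarith [exp_lt_one_iff.2 hy]) hy
  · exact div_pos (by linarith [one_lt_exp_iff.2 hy]) hy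

theorem hasDerivAt_logExprel {y : ℝ} (hy : y ≠ 0) :
    HasDerivAt logExprel (exp y / (exp y - 1) - y⁻¹) y := by
  have he : exp y - 1 ≠ 0 := by simpa [sub_eq_zero] using hy
  refine ((((hasDerivAt_exp y).sub_const 1).fun_div (hasDerivAt_id' y) hy).log
    (exp_sub_one_div_pos hy).ne').congr_deriv ?_
  field_simp

theorem hasDerivAt_deriv_logExprel {y : ℝ} (hy : y ≠ 0) :
    HasDerivAt (fun y => exp y / (exp y - 1) - y⁻¹) ((y ^ 2)⁻¹ - exp y / (exp y - 1) ^ 2) y := by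
  have he : exp y - 1 ≠ 0 := by simpa [sub_eq_zero] using hy
  refine (((hasDerivAt_exp y).fun_div ((hasDerivAt_exp y).sub_const 1) he).sub
    (hasDerivAt_inv hy)).congr_deriv ?_
  field_simp
  ring

theorem convexOn_logExprel : ConvexOn ℝ (Ioi 0) logExprel := by
  refine convexOn_of_hasDerivWithinAt2_nonneg (f' := fun y => exp y / (exp y - 1) - y⁻¹)
    (f'' := fun y => (y ^ 2)⁻¹ - exp y / (exp y - 1) ^ 2) (convex_Ioi 0)
    (fun y hy => (hasDerivAt_logExprel (ne_of_gt hy)).continuousAt.continuousWithinAt)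
    ?_ ?_ ?_ <;> rw [interior_Ioi] <;> intro y (hy : 0 < y)
  · exact (hasDerivAt_logExprel hy.ne').hasDerivWithinAt
  · exact (hasDerivAt_deriv_logExprel hy.ne').hasDerivWithinAt
  · have he : 0 < exp y - 1 := by linarith [one_lt_exp_iff.2 hy]
    rw [sub_nonneg, div_le_iff₀ (by positivity), inv_mul_eq_div, le_div_iff₀ (by positivity)]
    simpa [mul_comm] using sq_mul_exp_le_sq_exp_sub_one y

theorem rpow_sub_one_div_eq_log_mul_exp_logExprel {x u : ℝ} (hx : 0 < x) (hx1 : x ≠ 1)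
    (hu : u ≠ 0) : (x ^ u - 1) / u = log x * exp (logExprel (log x * u)) := by
  have hL : log x ≠ 0 := log_ne_zero_of_pos_of_ne_one hx hx1
  have hLu : log x * u ≠ 0 := mul_ne_zero hL hu
  rw [logExprel, exp_log (exp_sub_one_div_pos hLu), ← rpow_def_of_pos hx]
  field_simp

theorem rpow_mul_log_sub_div_eq {x u : ℝ} (hx : 0 < x) (hx1 : x ≠ 1) (hu : u ≠ 0) (c : ℝ) :
    (x ^ u * log x - (x ^ u - 1) / u) * c / (u * ((x ^ u - 1) / u)) =
      (exp (log x * u) / (exp (log x * u) - 1) - (log x * u)⁻¹) * (log x * c) := by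
  have hL : log x ≠ 0 := log_ne_zero_of_pos_of_ne_one hx hx1
  have he : x ^ u - 1 ≠ 0 := by
    simpa [rpow_def_of_pos hx, sub_eq_zero] using mul_ne_zero hL hu
  rw [← rpow_def_of_pos hx]
  field_simp

theorem stmt_18 (s t x : ℝ) (hs : 0 < s) (ht : 0 < t) (hx : 1 < x) :
    Real.exp ((x ^ s * Real.log x - (x ^ s - 1) / s) * (t - s) / (s * ((x ^ s - 1) / s))) *
        ((x ^ s - 1) / s) ≤ (x ^ t - 1) / t ∧
      (x ^ t - 1) / t ≤
        Real.exp ((x ^ t * Real.log x - (x ^ t - 1) / t) * (t - s) / (t * ((x ^ t - 1) / t))) *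
          ((x ^ s - 1) / s) := by
  have hx0 : 0 < x := one_pos.trans hx
  have hL : 0 < log x := log_pos hx
  have hLs : log x * s ∈ Ioi 0 := mul_pos hL hs
  have hLt : log x * t ∈ Ioi 0 := mul_pos hL ht
  have lower := convexOn_logExprel.deriv_mul_sub_le_sub hLs hLt (hasDerivAt_logExprel hLs.ne')
  have upper := convexOn_logExprel.sub_le_deriv_mul_sub hLs hLt (hasDerivAt_logExprel hLt.ne')
  rw [← mul_sub] at lower upper
  rw [rpow_mul_log_sub_div_eq hx0 hx.ne' hs.ne', rpow_mul_log_sub_div_eq hx0 hx.ne' ht.ne',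
    rpow_sub_one_div_eq_log_mul_exp_logExprel hx0 hx.ne' hs.ne',
    rpow_sub_one_div_eq_log_mul_exp_logExprel hx0 hx.ne' ht.ne',
    mul_left_comm (exp _), mul_left_comm (exp _), ← exp_add, ← exp_add]
  constructor <;> gcongr <;> linarith
end

section
/- For all a, b > 0 and 0 ≤ t ≤ 1, exp((log(b/a) + 1 - b/a) t) ≤ (a♯_t b)/(a∇_t b) ≤ exp((log(b/a) - (b-a)/(a∇_t b)) t). -/
/-!
Write `m = (1 - t) a + t b`. Then `log (a^(1-t) b^t / m) = t log (b/a) - log (m/a)`, and the two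
elementary bounds `1 - 1/x ≤ log x ≤ x - 1` at `x = m/a` give
`t (b - a)/m ≤ log (m/a) ≤ t (b - a)/a`, which are the two inequalities after exponentiating.
-/

open Real

section WeightedMeans

variable {a b t : ℝ}

lemma weighted_arith_mean_pos (ha : 0 < a) (hb : 0 < b) (ht0 : 0 ≤ t) (ht1 : t ≤ 1) :
    0 < (1 - t) * a + t * b := by
  rcases ht1.lt_or_eq with ht1 | rfl
  · nlinarith
  · linarith

lemma log_weighted_geom_div (ha : 0 < a) (hb : 0 < b) {m : ℝ} (hm : 0 < m) :
    log (a ^ (1 - t) * b ^ t / m) = t * log (b / a) - log (m / a) := by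
  rw [log_div (by positivity) hm.ne', log_mul (by positivity) (by positivity),
    log_rpow ha, log_rpow hb, log_div hb.ne' ha.ne', log_div hm.ne' ha.ne']
  ring

lemma log_weighted_arith_div_le (ha : 0 < a) (hm : 0 < (1 - t) * a + t * b) :
    log (((1 - t) * a + t * b) / a) ≤ t * (b / a - 1) := by
  calc log (((1 - t) * a + t * b) / a) ≤ ((1 - t) * a + t * b) / a - 1 :=
        log_le_sub_one_of_pos (by positivity)
    _ = t * (b / a - 1) := by field_simp; ring

lemma le_log_weighted_arith_div (ha : 0 < a) (hm : 0 < (1 - t) * a + t * b) :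
    t * ((b - a) / ((1 - t) * a + t * b)) ≤ log (((1 - t) * a + t * b) / a) := by
  calc t * ((b - a) / ((1 - t) * a + t * b)) = 1 - (((1 - t) * a + t * b) / a)⁻¹ := by
        rw [inv_div, one_sub_div hm.ne']
        ring
    _ ≤ log (((1 - t) * a + t * b) / a) := one_sub_inv_le_log_of_pos (by positivity)

end WeightedMeans

theorem stmt_19 (a b t : ℝ) (ha : 0 < a) (hb : 0 < b) (ht0 : 0 ≤ t) (ht1 : t ≤ 1) :
    Real.exp ((Real.log (b / a) + 1 - b / a) * t) ≤
        (a ^ (1 - t) * b ^ t) / ((1 - t) * a + t * b) ∧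
      (a ^ (1 - t) * b ^ t) / ((1 - t) * a + t * b) ≤
        Real.exp ((Real.log (b / a) - (b - a) / ((1 - t) * a + t * b)) * t) := by
  have hm := weighted_arith_mean_pos ha hb ht0 ht1
  have hratio : 0 < a ^ (1 - t) * b ^ t / ((1 - t) * a + t * b) := by positivity
  have hlog := log_weighted_geom_div (t := t) ha hb hm
  constructor
  · rw [← le_log_iff_exp_le hratio, hlog]
    linarith [log_weighted_arith_div_le ha hm]
  · rw [← log_le_iff_le_exp hratio, hlog]
    linarith [le_log_weighted_arith_div ha hm]
end
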